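/- arXiv:1605.07879 — 3 statements merged into one kernel-verified Lean document; each statement's English description precedes it below -/
import Mathlib

section
/- Let ι be a finite type, F = FreeGroup ι, Φ an automorphism of F, and G = F ⋊_Φ ℤ the associated semidirect product, with t ∈ G the generator of the ℤ-factor. Then for every f ∈ F, the cyclic subgroup H = ⟨f·t⟩ of G generated by (the image of) f times t is a separable subgroup of G: for every g ∈ G with g ∉ H there is a finite-index subgroup K of G with H ≤ K and g ∉ K. (Paper's Lemma 5.12.) -/
/-!
Write `c = f t`. Every `g ∈ F ⋊ ℤ` is `a c^m` with `a ∈ F`, and `g ∉ ⟨c⟩` means `a ≠ 1`. Free groups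
of finite rank are residually finite: a reduced word of length `n` moves `n` to `0` under suitable
permutations of `{0, …, n}`, one per generator. Intersecting the kernels of all homomorphisms to a
finite quotient that separates `a` gives a characteristic subgroup `N ≤ F` of finite index with
`a ∉ N`. Then `N` is normal in `F ⋊ ℤ`, and `K = N ⟨c⟩` meets `F` exactly in `N`; since `F ⟨c⟩` is
everything, the index of `K` is that of `N`, and `a c^m ∉ K`.
-/

theorem Equiv.Perm.exists_apply_eq_of_rel {X : Type*} [Finite X] (r : X → X → Prop)
    (hfun : ∀ p q q', r p q → r p q' → q = q') (hinj : ∀ p p' q, r p q → r p' q → p = p') :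
    ∃ σ : Equiv.Perm X, ∀ p q, r p q → σ p = q := by
  classical
  let s : Set X := {p | ∃ q, r p q}
  let f : X → X := fun p => if h : ∃ q, r p q then h.choose else p
  have hf : ∀ p q, r p q → f p = q := fun p q h => by
    have hp : ∃ q, r p q := ⟨q, h⟩
    simp only [f, dif_pos hp]
    exact hfun _ _ _ hp.choose_spec h
  have hinjOn : Set.InjOn f s := by
    rintro p ⟨q, hq⟩ p' ⟨q', hq'⟩ he
    rw [hf p q hq, hf p' q' hq'] at he
    exact hinj p p' q hq (he ▸ hq')
  refine ⟨(hinjOn.bijOn_image.equiv f).extendSubtype, fun p q h => ?_⟩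
  rw [Equiv.extendSubtype_apply_of_mem _ _ ⟨q, h⟩]
  exact hf p q h

theorem List.prod_map_apply_of_forall_getElem {β X : Type*} (π : β → Equiv.Perm X)
    (s : ℕ → X) (L : List β) (h : ∀ i (hi : i < L.length), π L[i] (s (i + 1)) = s i) :
    (L.map π).prod (s L.length) = s 0 := by
  induction L generalizing s with
  | nil => rfl
  | cons b L ih =>
    have := ih (fun i => s (i + 1)) fun i hi => h (i + 1) (by simpa using hi)
    simp only [List.map_cons, List.prod_cons, Equiv.Perm.mul_apply, List.length_cons, this]
    exact h 0 (by simp)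

theorem Subgroup.relIndex_eq_index_of_forall_exists {G : Type*} [Group G] {H K : Subgroup G}
    (h : ∀ g, ∃ k ∈ K, k⁻¹ * g ∈ H) : H.relIndex K = H.index := by
  rw [← relIndex_top_right]
  refine Nat.card_congr (Equiv.ofBijective (quotientSubgroupOfEmbeddingOfLE H le_top)
    ⟨(quotientSubgroupOfEmbeddingOfLE H le_top).injective, ?_⟩)
  rintro ⟨g, -⟩
  obtain ⟨k, hk, hkg⟩ := h g
  exact ⟨QuotientGroup.mk ⟨k, hk⟩, QuotientGroup.eq.mpr hkg⟩

instance MonoidHom.finite_of_fg {G Q : Type*} [Group G] [Group Q] [Group.FG G] [Finite Q] :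
    Finite (G →* Q) := by
  obtain ⟨S, hS⟩ := Group.FG.out (G := G)
  exact Finite.of_injective (fun ψ : G →* Q => fun s : S => ψ s)
    fun ψ ψ' he => MonoidHom.eq_of_eqOn_dense hS fun s hs => congrFun he ⟨s, hs⟩

namespace FreeGroup

variable {α : Type*}

theorem IsReduced.not_getElem?_eq_inv {w : List (α × Bool)} (hw : IsReduced w) {i : ℕ}
    {x : α} {b : Bool} (h : w[i]? = some (x, b)) (h' : w[i + 1]? = some (x, !b)) : False := by
  obtain ⟨hi, hwi⟩ := List.getElem?_eq_some_iff.mp h'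
  have := List.IsChain.getElem hw i hi
  rw [(List.getElem?_eq_some_iff.mp h).2, hwi] at this
  simp at this

/-- The steps of the generator `x` in the walk from `w.length` down to `0` that reads `w` from the
right; an occurrence of `x⁻¹` is recorded backwards, as an upward step of `x`. -/
def LetterStep (w : List (α × Bool)) (x : α) (p q : Fin (w.length + 1)) : Prop :=
  ∃ i, (w[i]? = some (x, true) ∧ p.val = i + 1 ∧ q.val = i) ∨
    (w[i]? = some (x, false) ∧ p.val = i ∧ q.val = i + 1)

theorem IsReduced.exists_perm_letterStep {w : List (α × Bool)} (hw : IsReduced w) (x : α) :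
    ∃ σ : Equiv.Perm (Fin (w.length + 1)), ∀ p q, LetterStep w x p q → σ p = q := by
  apply Equiv.Perm.exists_apply_eq_of_rel
  · rintro p q q' ⟨i, ⟨hi, hp, hq⟩ | ⟨hi, hp, hq⟩⟩ ⟨j, ⟨hj, hp', hq'⟩ | ⟨hj, hp', hq'⟩⟩ <;>
      apply Fin.ext
    · omega
    · exact (hw.not_getElem?_eq_inv hi (by rwa [show i + 1 = j by omega])).elim
    · exact (hw.not_getElem?_eq_inv hj (by rwa [show j + 1 = i by omega])).elim
    · omega
  · rintro p p' q ⟨i, ⟨hi, hp, hq⟩ | ⟨hi, hp, hq⟩⟩ ⟨j, ⟨hj, hp', hq'⟩ | ⟨hj, hp', hq'⟩⟩ <;>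
      apply Fin.ext
    · omega
    · exact (hw.not_getElem?_eq_inv hj (by rwa [show j + 1 = i by omega])).elim
    · exact (hw.not_getElem?_eq_inv hi (by rwa [show i + 1 = j by omega])).elim
    · omega

theorem IsReduced.exists_lift_mk_apply_last_eq_zero {w : List (α × Bool)} (hw : IsReduced w) :
    ∃ σ : α → Equiv.Perm (Fin (w.length + 1)), lift σ (mk w) (Fin.last _) = 0 := by
  choose σ hσ using hw.exists_perm_letterStep
  refine ⟨σ, ?_⟩
  have key := List.prod_map_apply_of_forall_getElem (fun l => cond l.2 (σ l.1) (σ l.1)⁻¹)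
    (Fin.ofNat (w.length + 1)) w ?_
  · rw [lift_mk]
    simpa using key
  · intro i hi
    have hval : ∀ j ≤ w.length, (Fin.ofNat (w.length + 1) j).val = j := fun j hj =>
      Nat.mod_eq_of_lt (Nat.lt_succ_of_le hj)
    have hwi : w[i]? = some w[i] := List.getElem?_eq_getElem hi
    generalize w[i] = l at hwi ⊢
    obtain ⟨x, _ | _⟩ := l
    · rw [cond_false, Equiv.Perm.inv_eq_iff_eq]
      exact (hσ x _ _ ⟨i, .inr ⟨hwi, hval i hi.le, hval (i + 1) hi⟩⟩).symm
    · exact hσ x _ _ ⟨i, .inl ⟨hwi, hval (i + 1) hi, hval i hi.le⟩⟩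

instance : Group.ResiduallyFinite (FreeGroup α) :=
  Group.residuallyFinite_of_forall_exists_finite_monoidHom fun a ha => by
    classical
    obtain ⟨σ, hσ⟩ := (isReduced_toWord (x := a)).exists_lift_mk_apply_last_eq_zero
    refine ⟨_, _, inferInstance, lift σ, fun h => ha ?_⟩
    rw [mk_toWord, h, Equiv.Perm.one_apply, Fin.last_eq_zero_iff, List.length_eq_zero_iff,
      toWord_eq_nil_iff] at hσ
    exact hσ

end FreeGroup

namespace Group

variable {G : Type*} [Group G]

theorem characteristic_iInf_ker (Q : Type*) [Group Q] :
    (⨅ ψ : G →* Q, ψ.ker).Characteristic := by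
  refine Subgroup.characteristic_iff_le_comap.mpr fun ϕ x hx => ?_
  simp only [Subgroup.mem_comap, Subgroup.mem_iInf, MonoidHom.mem_ker] at hx ⊢
  exact fun ψ => hx (ψ.comp ϕ.toMonoidHom)

theorem exists_characteristic_finiteIndex_notMem [FG G] [ResiduallyFinite G] {g : G}
    (hg : g ≠ 1) : ∃ N : Subgroup G, N.Characteristic ∧ N.FiniteIndex ∧ g ∉ N := by
  obtain ⟨H, hgH⟩ := exists_finiteIndexNormalSubgroup_notMem g hg
  refine ⟨_, characteristic_iInf_ker (G ⧸ H.toSubgroup),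
    Subgroup.finiteIndex_iInf fun _ => inferInstance, fun hg' => hgH ?_⟩
  exact FiniteIndexNormalSubgroup.mem_toSubgroup_iff.mp <| by
    simpa using Subgroup.mem_iInf.mp hg' (QuotientGroup.mk' H.toSubgroup)

end Group

namespace SemidirectProduct

open Multiplicative

variable {F : Type*} [Group F] {φ : Multiplicative ℤ →* MulAut F}

theorem right_zpow (c : F ⋊[φ] Multiplicative ℤ) (k : ℤ) : (c ^ k).right = c.right ^ k :=
  map_zpow (rightHom : F ⋊[φ] Multiplicative ℤ →* _) c k

theorem right_zpow_of_right_eq_ofAdd_one {c : F ⋊[φ] Multiplicative ℤ} (hc : c.right = ofAdd 1)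
    (k : ℤ) : (c ^ k).right = ofAdd k := by
  rw [right_zpow, hc, ← ofAdd_zsmul, smul_eq_mul, mul_one]

theorem exists_eq_inl_mul_zpow {c : F ⋊[φ] Multiplicative ℤ} (hc : c.right = ofAdd 1)
    (g : F ⋊[φ] Multiplicative ℤ) : ∃ (a : F) (m : ℤ), g = inl a * c ^ m := by
  obtain ⟨a, ha⟩ : g * (c ^ g.right.toAdd)⁻¹ ∈ (inl : F →* _).range := by
    rw [range_inl_eq_ker_rightHom, MonoidHom.mem_ker, map_mul, map_inv, rightHom_eq_right,
      right_zpow_of_right_eq_ofAdd_one hc, ofAdd_toAdd, mul_inv_cancel]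
  exact ⟨a, g.right.toAdd, by rw [ha, inv_mul_cancel_right]⟩

instance normal_map_inl (N : Subgroup F) [N.Characteristic] :
    (N.map (inl : F →* F ⋊[φ] Multiplicative ℤ)).Normal where
  conj_mem := by
    rintro _ ⟨n, hn, rfl⟩ g
    have hφn : φ g.right n ∈ N := Subgroup.characteristic_iff_le_comap.mp ‹_› (φ g.right) hn
    have hconj : g * inl n * g⁻¹ = inl (g.left * φ g.right n * g.left⁻¹) := by
      conv_lhs => rw [← inl_left_mul_inr_right g]
      rw [map_mul, map_mul, map_inv, inl_aut, mul_inv_rev, ← map_inv]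
      group
    rw [hconj]
    exact Subgroup.mem_map_of_mem _ (Subgroup.Normal.conj_mem inferInstance _ hφn _)

variable (N : Subgroup F) [N.Characteristic] {c : F ⋊[φ] Multiplicative ℤ}

theorem comap_inl_map_inl_sup_zpowers (hc : c.right = ofAdd 1) :
    (N.map inl ⊔ Subgroup.zpowers c).comap inl = N := by
  refine le_antisymm (fun a ha => ?_) fun a ha => Subgroup.mem_sup_left (N.mem_map_of_mem inl ha)
  obtain ⟨_, ⟨n, hn, rfl⟩, _, ⟨k, rfl⟩, h⟩ := Subgroup.mem_sup_of_normal_left.mp ha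
  beta_reduce at h
  have hk : k = 0 := by
    simpa [right_zpow_of_right_eq_ofAdd_one hc] using congrArg right h
  rw [hk, zpow_zero, mul_one, inl_inj] at h
  exact h ▸ hn

theorem finiteIndex_map_inl_sup_zpowers [N.FiniteIndex] (hc : c.right = ofAdd 1) :
    (N.map inl ⊔ Subgroup.zpowers c).FiniteIndex := by
  rw [Subgroup.finiteIndex_iff, ← Subgroup.relIndex_eq_index_of_forall_exists (K := inl.range),
    ← Subgroup.index_comap, comap_inl_map_inl_sup_zpowers N hc]
  · exact Subgroup.FiniteIndex.index_ne_zero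
  · intro g
    obtain ⟨a, m, rfl⟩ := exists_eq_inl_mul_zpow hc g
    refine ⟨inl a, ⟨a, rfl⟩, ?_⟩
    rw [inv_mul_cancel_left]
    exact Subgroup.mem_sup_right (Subgroup.zpow_mem_zpowers c m)

end SemidirectProduct

open SemidirectProduct Multiplicative

theorem cyclic_subgroup_fxt_separable_general
    (ι : Type) [Finite ι]
    (φ : Multiplicative ℤ →* MulAut (FreeGroup ι))
    (f : FreeGroup ι)
    (g : FreeGroup ι ⋊[φ] Multiplicative ℤ)
    (hg : g ∉ Subgroup.zpowers
      ((SemidirectProduct.inl f : FreeGroup ι ⋊[φ] Multiplicative ℤ) *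
        SemidirectProduct.inr (Multiplicative.ofAdd (1 : ℤ)))) :
    ∃ K : Subgroup (FreeGroup ι ⋊[φ] Multiplicative ℤ),
      K.FiniteIndex ∧
      Subgroup.zpowers
        ((SemidirectProduct.inl f : FreeGroup ι ⋊[φ] Multiplicative ℤ) *
          SemidirectProduct.inr (Multiplicative.ofAdd (1 : ℤ))) ≤ K ∧
      g ∉ K := by
  set c : FreeGroup ι ⋊[φ] Multiplicative ℤ := inl f * inr (ofAdd 1)
  have hc : c.right = ofAdd 1 := by simp [c]
  obtain ⟨a, m, rfl⟩ := exists_eq_inl_mul_zpow hc g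
  have hcm : c ^ m ∈ Subgroup.zpowers c := Subgroup.zpow_mem_zpowers c m
  have ha : a ≠ 1 := by
    rintro rfl
    exact hg (by rwa [map_one, one_mul])
  obtain ⟨N, _, _, haN⟩ := Group.exists_characteristic_finiteIndex_notMem ha
  refine ⟨N.map inl ⊔ Subgroup.zpowers c, finiteIndex_map_inl_sup_zpowers N hc, le_sup_right,
    fun hK => haN ?_⟩
  rw [← comap_inl_map_inl_sup_zpowers N hc]
  simpa using mul_mem hK (inv_mem (Subgroup.mem_sup_right hcm))

/-- **Separability of `⟨f·t⟩` in `F ⋊_Φ ℤ`** (paper's Lemma 5.12).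
`F = FreeGroup ι` with `ι` finite, `Φ` an automorphism of `F` encoded by the
homomorphism `φ : Multiplicative ℤ →* MulAut F` with `φ (ofAdd k) = Φ ^ k`,
`G = F ⋊[φ] Multiplicative ℤ`, and `t = inr (ofAdd 1)`.  For every `f ∈ F`,
the cyclic subgroup `⟨f·t⟩` is separable in `G`. -/
theorem cyclic_subgroup_fxt_separable
    (ι : Type) [Finite ι]
    (Φ : MulAut (FreeGroup ι))
    (φ : Multiplicative ℤ →* MulAut (FreeGroup ι))
    (hφ : ∀ k : ℤ, φ (Multiplicative.ofAdd k) = Φ ^ k)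
    (f : FreeGroup ι)
    (g : FreeGroup ι ⋊[φ] Multiplicative ℤ)
    (hg : g ∉ Subgroup.zpowers
      ((SemidirectProduct.inl f : FreeGroup ι ⋊[φ] Multiplicative ℤ) *
        SemidirectProduct.inr (Multiplicative.ofAdd (1 : ℤ)))) :
    ∃ K : Subgroup (FreeGroup ι ⋊[φ] Multiplicative ℤ),
      K.FiniteIndex ∧
      Subgroup.zpowers
        ((SemidirectProduct.inl f : FreeGroup ι ⋊[φ] Multiplicative ℤ) *
          SemidirectProduct.inr (Multiplicative.ofAdd (1 : ℤ))) ≤ K ∧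
      g ∉ K :=
  cyclic_subgroup_fxt_separable_general ι φ f g hg
end

section
/- Let G be a residually finite group and let r : G →* G be a group homomorphism with r ∘ r = r (an idempotent endomorphism, i.e. a retraction of G onto its image). Then the image r(G), viewed as a subgroup of G, is separable: for every g ∈ G with g ∉ r(G) there exists a finite-index subgroup K of G with r(G) ≤ K and g ∉ K. (The principle 'a retract of a residually finite group is separable' used in the paper's proof of Lemma 5.12.) -/
/-- A group `G` is residually finite if every nontrivial element survives in some
finite quotient: for every `g ≠ 1` there is a homomorphism `ψ` from `G` to a finite
group with `ψ g ≠ 1`. -/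
def IsResiduallyFinite (G : Type*) [Group G] : Prop :=
  ∀ g : G, g ≠ 1 → ∃ (Q : Type) (_ : Group Q) (_ : Finite Q) (ψ : G →* Q), ψ g ≠ 1

/-- **A retract of a residually finite group is separable** (used in the paper's
proof of Lemma 5.12).  If `G` is residually finite and `r : G →* G` is an idempotent
endomorphism (`r ∘ r = r`), then the image `r(G)` is a separable subgroup of `G`:
for every `g ∉ r(G)` there is a finite-index subgroup `K` with `r(G) ≤ K` and
`g ∉ K`. -/
theorem retract_of_residually_finite_is_separable
    {G : Type*} [Group G]
    (hRF : IsResiduallyFinite G)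
    (r : G →* G) (hr : r.comp r = r)
    (g : G) (hg : g ∉ r.range) :
    ∃ K : Subgroup G, K.FiniteIndex ∧ r.range ≤ K ∧ g ∉ K := by
  have hne : (r g)⁻¹ * g ≠ 1 := by
    intro h
    apply hg
    have : r g = g := by
      have := mul_eq_one_iff_inv_eq.mp h
      simpa using this
    exact ⟨g, this⟩
  obtain ⟨Q, _, _, ψ, hψ⟩ := hRF _ hne
  have hψne : ψ (r g) ≠ ψ g := by
    intro h
    apply hψ
    simp [h]
  refine ⟨(ψ.comp r).eqLocus ψ, ?_, ?_, ?_⟩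
  · have hker : (ψ.comp r).ker ⊓ ψ.ker ≤ (ψ.comp r).eqLocus ψ := by
      intro x hx
      obtain ⟨h1, h2⟩ := hx
      show ψ (r x) = ψ x
      rw [show ψ (r x) = 1 from MonoidHom.mem_ker.mp h1, MonoidHom.mem_ker.mp h2]
    have : ((ψ.comp r).ker ⊓ ψ.ker).FiniteIndex := by
      infer_instance
    exact Subgroup.finiteIndex_of_le hker
  · rintro x ⟨y, rfl⟩
    show ψ (r (r y)) = ψ (r y)
    rw [show r (r y) = r y from DFunLike.congr_fun hr y]
  · intro hx
    exact hψne hx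
end

section
/- Let ι be a finite type, F = FreeGroup ι, Φ an automorphism of F, and G = F ⋊_Φ ℤ, with t ∈ G the generator of the ℤ-factor. Assume that every Φ-periodic element of F is Φ-fixed: for all f ∈ F and all nonzero integers p, if Φ^p(f) = f then Φ(f) = f (this is the property of improved relative train track representatives of polynomially growing automorphisms invoked in the paper: periodic elements are represented by Nielsen paths). Then whenever g ∈ G and p, q are nonzero integers with g·t^p·g⁻¹ = t^q, the element g commutes with t: g·t = t·g. (Paper's Lemma 5.13.) -/
/-!
Write `g = f · t^a` with `f ∈ F`. Because the acting group `ℤ` is abelian, the `F`-coordinate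
of `g t^p g⁻¹` is `f · Φ^p(f)⁻¹`, so `g t^p g⁻¹ = t^q` forces `f` to be `Φ`-periodic, hence
`Φ`-fixed; and `Φ(f) = f` is exactly the condition for `g` to commute with `t`.
-/

open SemidirectProduct Multiplicative

namespace SemidirectProduct

section CommGroup

variable {N G : Type*} [Group N] [CommGroup G] {φ : G →* MulAut N}

theorem left_mul_inr_mul_inv (g : N ⋊[φ] G) (h : G) :
    (g * inr h * g⁻¹).left = g.left * (φ h g.left)⁻¹ := by
  simp [mul_comm g.right h, map_mul]

theorem map_left_eq_of_mul_inr_mul_inv_eq_inr {g : N ⋊[φ] G} {h k : G}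
    (hg : g * inr h * g⁻¹ = inr k) : φ h g.left = g.left := by
  have := congrArg left hg
  rw [left_mul_inr_mul_inv, left_inr, mul_inv_eq_one] at this
  exact this.symm

theorem commute_inr_iff (g : N ⋊[φ] G) (h : G) :
    Commute g (inr h) ↔ φ h g.left = g.left := by
  constructor
  · intro hc
    simpa [eq_comm] using congrArg left hc.eq
  · intro hfix
    ext
    · simp [hfix]
    · simp [mul_comm]

end CommGroup

theorem inr_ofAdd_one_zpow {N : Type*} [Group N]
    {φ : Multiplicative ℤ →* MulAut N} (k : ℤ) :
    (inr (ofAdd 1) : N ⋊[φ] Multiplicative ℤ) ^ k = inr (ofAdd k) := by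
  rw [← map_zpow, ← ofAdd_zsmul, smul_eq_mul, mul_one]

end SemidirectProduct

theorem commensurates_t_implies_centralizes_t_general
    (ι : Type)
    (Φ : MulAut (FreeGroup ι))
    (φ : Multiplicative ℤ →* MulAut (FreeGroup ι))
    (hφ : ∀ k : ℤ, φ (Multiplicative.ofAdd k) = Φ ^ k)
    (hNielsen : ∀ (f : FreeGroup ι) (p : ℤ), p ≠ 0 → (Φ ^ p) f = f → Φ f = f)
    (t : FreeGroup ι ⋊[φ] Multiplicative ℤ)
    (ht : t = SemidirectProduct.inr (Multiplicative.ofAdd (1 : ℤ)))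
    (g : FreeGroup ι ⋊[φ] Multiplicative ℤ) (p q : ℤ)
    (hp : p ≠ 0)
    (h : g * t ^ p * g⁻¹ = t ^ q) :
    g * t = t * g := by
  subst ht
  rw [inr_ofAdd_one_zpow, inr_ofAdd_one_zpow] at h
  have hperiodic : (Φ ^ p) g.left = g.left := by
    rw [← hφ]
    exact map_left_eq_of_mul_inr_mul_inv_eq_inr h
  have hfixed : φ (ofAdd 1) g.left = g.left := by
    rw [hφ, zpow_one]
    exact hNielsen _ p hp hperiodic
  exact ((commute_inr_iff g _).2 hfixed).eq

/-- **Commensurating `t` implies centralizing `t`** (paper's Lemma 5.13).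
Let `F = FreeGroup ι` with `ι` finite, `Φ` an automorphism of `F` encoded by
`φ : Multiplicative ℤ →* MulAut F` with `φ (ofAdd k) = Φ ^ k`,
`G = F ⋊[φ] Multiplicative ℤ`, and `t = inr (ofAdd 1)`.  Assume every `Φ`-periodic
element of `F` is `Φ`-fixed (the Nielsen-path property of improved relative train
track representatives of polynomially growing automorphisms): for all `f ∈ F` and
nonzero `p : ℤ`, `Φ^p f = f → Φ f = f`.  Then `g·t^p·g⁻¹ = t^q` with `p, q ≠ 0`
implies `g·t = t·g`. -/
theorem commensurates_t_implies_centralizes_t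
    (ι : Type) [Finite ι]
    (Φ : MulAut (FreeGroup ι))
    (φ : Multiplicative ℤ →* MulAut (FreeGroup ι))
    (hφ : ∀ k : ℤ, φ (Multiplicative.ofAdd k) = Φ ^ k)
    (hNielsen : ∀ (f : FreeGroup ι) (p : ℤ), p ≠ 0 → (Φ ^ p) f = f → Φ f = f)
    (t : FreeGroup ι ⋊[φ] Multiplicative ℤ)
    (ht : t = SemidirectProduct.inr (Multiplicative.ofAdd (1 : ℤ)))
    (g : FreeGroup ι ⋊[φ] Multiplicative ℤ) (p q : ℤ)
    (hp : p ≠ 0) (hq : q ≠ 0)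
    (h : g * t ^ p * g⁻¹ = t ^ q) :
    g * t = t * g :=
  commensurates_t_implies_centralizes_t_general ι Φ φ hφ hNielsen t ht g p q hp h
end
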